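/- Average-case Laplacian rate bound: Let f(x) = exp(−2|x|) be the Laplacian, extended multiplicatively to ℝ². For any r > 0 and any prime q, letting μ_{r,r} := E_{e←D_r}[f_r(e)] for the Laplacian channel D_r (either the continuous distribution on ℝ with density f_r(x)/r, or the discrete distribution on ℤ with mass f_r(x)/f_r(ℤ)), it holds that A^(1)_{q,r}(r)² := μ_{r,r}²/f_r(L_q) > (tanh(2/r)/4)·E(q/r), where L_q := ∪_{z∈ℤ}((z,z) + qℤ²) and E(x) := (coth(x) + 4x·e^{2x}/(e^{2x} − 1)²)^{-1}. -/

import Mathlib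

noncomputable section

/-- The Laplacian function `f(x) = exp(-2|x|)`. -/
def lap (x : ℝ) : ℝ := Real.exp (-2 * |x|)

/-- The lattice `L_q = ∪_{z∈ℤ} ((z,z) + qℤ²) ⊂ ℝ²`. -/
def LqSet (q : ℕ) : Set (ℝ × ℝ) :=
  {v | ∃ z w₁ w₂ : ℤ, v.1 = z + q * w₁ ∧ v.2 = z + q * w₂}

/-- `f_s(L_q)`: the sum over `L_q` of the multiplicative extension of `f` to `ℝ²`,
scaled by `s` (i.e. `f_s(x) = f(x/s)`). -/
def fsLq (f : ℝ → ℝ) (s : ℝ) (q : ℕ) : ℝ :=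
  ∑' v : LqSet q, f ((v : ℝ × ℝ).1 / s) * f ((v : ℝ × ℝ).2 / s)

/-- `coth x = (e^x + e^{-x})/(e^x - e^{-x})`. -/
def coth' (x : ℝ) : ℝ := (Real.exp x + Real.exp (-x)) / (Real.exp x - Real.exp (-x))

/-- The "fudge factor" `E(x) = (coth(x) + 4x·e^{2x}/(e^{2x} − 1)²)⁻¹`. -/
def El (x : ℝ) : ℝ :=
  (coth' x + 4 * x * Real.exp (2 * x) / (Real.exp (2 * x) - 1) ^ 2)⁻¹

/-! Put `a = e^{-2/r}` and `b = a^q`. Both channels have `μ_{r,r} ≥ 1/2`: the continuous one has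
`μ = 1/2`, the discrete one `μ = (1 + a²)/(1 + a)²`. Parametrising `L_q` as
`{(c + qm, c + qw) | c < q, m w ∈ ℤ}` splits `f_r(L_q)` into `Σ_c S_c²` with
`S_c = Σ_m a^{|c+qm|} = (a^c + a^{q-c})/(1 - b)`, so that
`f_r(L_q)·(1 - b)² = (1 - b²)/tanh(2/r) + 2qb`. Hence
`tanh(2/r)·E(q/r)·f_r(L_q) = ((1 - b²) + 2qb·tanh(2/r)) / ((1 - b²) + 4(q/r)b) < 1`,
because `tanh x < x` for `x > 0`. -/

open Real

lemma Real.sinh_lt_mul_cosh {x : ℝ} (hx : 0 < x) : sinh x < x * cosh x := by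
  have hmono : StrictMonoOn (fun y ↦ y * cosh y - sinh y) (Set.Ici 0) := by
    refine strictMonoOn_of_deriv_pos (convex_Ici 0) (by fun_prop) fun y hy ↦ ?_
    rw [interior_Ici] at hy
    have hderiv : HasDerivAt (fun y ↦ y * cosh y - sinh y) (1 * cosh y + y * sinh y - cosh y) y :=
      ((hasDerivAt_id y).mul (hasDerivAt_cosh y)).sub (hasDerivAt_sinh y)
    rw [hderiv.deriv]
    have hy : 0 < y := hy
    nlinarith [mul_pos hy (sinh_pos_iff.mpr hy)]
  have h0 := hmono Set.self_mem_Ici hx.le hx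
  simp only [cosh_zero, sinh_zero, mul_one, sub_zero] at h0
  linarith

lemma Real.tanh_lt_self {x : ℝ} (hx : 0 < x) : tanh x < x := by
  rw [tanh_eq_sinh_div_cosh, div_lt_iff₀ (cosh_pos x)]
  exact sinh_lt_mul_cosh hx

lemma Real.tanh_eq_one_sub_exp_div (x : ℝ) :
    tanh x = (1 - exp (-2 * x)) / (1 + exp (-2 * x)) := by
  have hsplit : exp (-2 * x) = exp (-x) * exp (-x) := by rw [← exp_add]; ring_nf
  have hcancel : exp x * exp (-x) = 1 := by rw [← exp_add, add_neg_cancel, exp_zero]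
  rw [tanh_eq, hsplit, div_eq_div_iff (by positivity) (by positivity)]
  linear_combination 2 * exp (-x) * hcancel

lemma El_eq {x : ℝ} (hx : 0 < x) :
    El x = (1 - exp (-2 * x)) ^ 2 / ((1 - exp (-2 * x) ^ 2) + 4 * x * exp (-2 * x)) := by
  set u := exp x with hu_def
  have hu : 1 < u := one_lt_exp_iff.mpr hx
  have hsq : exp (2 * x) = u ^ 2 := by rw [sq, ← exp_add, two_mul]
  have hinv : exp (-2 * x) = (u ^ 2)⁻¹ := by rw [← hsq, ← exp_neg, neg_mul]
  have hu2 : u ^ 2 - 1 ≠ 0 := by nlinarith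
  have hu0 : u ≠ 0 := by positivity
  rw [El, coth', exp_neg, ← hu_def, hsq, hinv, ← inv_div]
  field_simp
  ring

lemma lap_intCast_div {r : ℝ} (hr : 0 ≤ r) (z : ℤ) : lap (z / r) = exp (-2 / r) ^ z.natAbs := by
  rw [lap, abs_div, abs_of_nonneg hr, ← exp_nat_mul, Nat.cast_natAbs, Int.cast_abs]
  ring_nf

lemma integral_lap_div_mul_lap {r : ℝ} (hr : 0 < r) :
    ∫ e : ℝ, lap (e / r) / r * lap (e / r) = 1 / 2 := by
  have hsq : ∀ e : ℝ, lap (e / r) / r * lap (e / r) = exp (-(4 / r) * |e|) / r := fun e ↦ by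
    rw [lap, abs_div, abs_of_pos hr, div_mul_eq_mul_div, ← exp_add]
    ring_nf
  simp_rw [hsq]
  rw [integral_comp_abs (f := fun x ↦ exp (-(4 / r) * x) / r), MeasureTheory.integral_div,
    integral_exp_mul_Ioi (by simpa using hr) 0]
  field_simp
  norm_num

lemma hasSum_pow_natAbs_add_mul {a : ℝ} (ha0 : 0 ≤ a) (ha1 : a < 1) {q c : ℕ} (hc : c < q) :
    HasSum (fun m : ℤ ↦ a ^ ((c : ℤ) + q * m).natAbs) ((a ^ c + a ^ (q - c)) / (1 - a ^ q)) := by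
  have hgeom := hasSum_geometric_of_lt_one (pow_nonneg ha0 q) (pow_lt_one₀ ha0 ha1 (by omega))
  have hnat : HasSum (fun n : ℕ ↦ a ^ ((c : ℤ) + q * n).natAbs) (a ^ c * (1 - a ^ q)⁻¹) := by
    refine (hgeom.mul_left (a ^ c)).congr_fun fun n ↦ ?_
    have h : (c : ℤ) + q * n = ((c + q * n : ℕ) : ℤ) := by push_cast; ring
    rw [h, Int.natAbs_natCast, pow_add, pow_mul]
  have hneg : HasSum (fun n : ℕ ↦ a ^ ((c : ℤ) + q * (-(n + 1 : ℤ))).natAbs)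
      (a ^ (q - c) * (1 - a ^ q)⁻¹) := by
    refine (hgeom.mul_left (a ^ (q - c))).congr_fun fun n ↦ ?_
    have h : (c : ℤ) + q * (-(n + 1 : ℤ)) = -((q - c + q * n : ℕ) : ℤ) := by
      push_cast [Nat.cast_sub hc.le]
      ring
    rw [h, Int.natAbs_neg, Int.natAbs_natCast, pow_add, pow_mul]
  rw [add_div, div_eq_mul_inv, div_eq_mul_inv]
  exact HasSum.of_nat_of_neg_add_one (f := fun m : ℤ ↦ a ^ ((c : ℤ) + q * m).natAbs) hnat hneg

lemma hasSum_pow_natAbs {a : ℝ} (ha0 : 0 ≤ a) (ha1 : a < 1) :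
    HasSum (fun k : ℤ ↦ a ^ k.natAbs) ((1 + a) / (1 - a)) := by
  simpa using hasSum_pow_natAbs_add_mul ha0 ha1 (q := 1) (c := 0) one_pos

lemma exp_neg_two_div_lt_one {r : ℝ} (hr : 0 < r) : exp (-2 / r) < 1 :=
  exp_lt_one_iff.mpr (div_neg_of_neg_of_pos (by norm_num) hr)

lemma half_le_tsum_lap_mul_lap_div_tsum_lap {r : ℝ} (hr : 0 < r) :
    1 / 2 ≤ (∑' k : ℤ, lap (k / r) * lap (k / r)) / ∑' k : ℤ, lap (k / r) := by
  set a := exp (-2 / r)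
  have ha0 : 0 < a := exp_pos _
  have ha1 : a < 1 := exp_neg_two_div_lt_one hr
  simp_rw [lap_intCast_div hr.le, ← mul_pow]
  rw [(hasSum_pow_natAbs (by positivity) (by nlinarith)).tsum_eq,
    (hasSum_pow_natAbs ha0.le ha1).tsum_eq, le_div_iff₀ (by apply div_pos <;> linarith),
    div_mul_div_comm, div_le_div_iff₀ (by nlinarith) (by nlinarith)]
  nlinarith [sq_nonneg (1 - a), mul_pos ha0 (sub_pos.mpr ha1)]

lemma tsum_prod_mul_self_eq_sum_sq {ι β : Type*} [Fintype ι] {g : ι → β → ℝ}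
    (hg0 : ∀ i, 0 ≤ g i) (hg : ∀ i, Summable (g i)) :
    ∑' p : ι × β × β, g p.1 p.2.1 * g p.1 p.2.2 = ∑ i, (∑' b, g i b) ^ 2 := by
  have hfiber : ∀ i, Summable fun p : β × β ↦ g i p.1 * g i p.2 :=
    fun i ↦ (hg i).mul_of_nonneg (hg i) (hg0 i) (hg0 i)
  have hsummable : Summable fun p : ι × β × β ↦ g p.1 p.2.1 * g p.1 p.2.2 :=
    (summable_prod_of_nonneg fun p ↦ mul_nonneg (hg0 _ _) (hg0 _ _)).2 ⟨hfiber, .of_finite⟩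
  rw [hsummable.tsum_prod' hfiber, tsum_fintype]
  refine Finset.sum_congr rfl fun i _ ↦ ?_
  rw [sq, (hg i).tsum_mul_tsum (hg i) (hfiber i)]

lemma Int.natCast_add_mul_injective (q : ℕ) [NeZero q] :
    Function.Injective fun p : Fin q × ℤ ↦ (p.1 : ℤ) + q * p.2 := by
  intro p p' h
  have hpair := (Int.divModEquiv q).symm.injective (a₁ := (p.2, p.1)) (a₂ := (p'.2, p'.1)) (by
    simp only [Int.divModEquiv_symm_apply]
    linarith)
  simp only [Prod.mk.injEq] at hpair
  exact Prod.ext hpair.2 hpair.1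

def finProdLqEquiv (q : ℕ) [NeZero q] : Fin q × ℤ × ℤ ≃ LqSet q :=
  Equiv.ofBijective
    (fun p ↦ ⟨(((p.1 : ℤ) + q * p.2.1 : ℤ), ((p.1 : ℤ) + q * p.2.2 : ℤ)),
      p.1, p.2.1, p.2.2, by push_cast; exact ⟨rfl, rfl⟩⟩)
    ⟨fun p p' h ↦ by
      have h₁ := congrArg (fun v : LqSet q ↦ (v : ℝ × ℝ).1) h
      have h₂ := congrArg (fun v : LqSet q ↦ (v : ℝ × ℝ).2) h
      simp only [Int.cast_inj] at h₁ h₂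
      have e₁ := Int.natCast_add_mul_injective q (a₁ := (p.1, p.2.1)) (a₂ := (p'.1, p'.2.1)) h₁
      have e₂ := Int.natCast_add_mul_injective q (a₁ := (p.1, p.2.2)) (a₂ := (p'.1, p'.2.2)) h₂
      simp only [Prod.mk.injEq] at e₁ e₂
      exact Prod.ext e₁.1 (Prod.ext e₁.2 e₂.2),
    fun ⟨v, z, w₁, w₂, h₁, h₂⟩ ↦ by
      have hz := (Int.divModEquiv q).symm_apply_apply z
      set p := Int.divModEquiv q z
      rw [Int.divModEquiv_symm_apply] at hz
      have hz' : (z : ℝ) = p.1 * q + (p.2 : ℤ) := by exact_mod_cast hz.symm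
      refine ⟨(p.2, p.1 + w₁, p.1 + w₂), Subtype.ext (Prod.ext ?_ ?_)⟩
      · simp only [h₁, hz']
        push_cast
        ring
      · simp only [h₂, hz']
        push_cast
        ring⟩

lemma fsLq_eq_sum_sq {f : ℝ → ℝ} (hf0 : ∀ x, 0 ≤ f x) (s : ℝ) (q : ℕ) [NeZero q]
    (hf : ∀ c : Fin q, Summable fun m : ℤ ↦ f (((c + q * m : ℤ) : ℝ) / s)) :
    fsLq f s q = ∑ c : Fin q, (∑' m : ℤ, f (((c + q * m : ℤ) : ℝ) / s)) ^ 2 := by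
  rw [fsLq, ← (finProdLqEquiv q).tsum_eq]
  exact tsum_prod_mul_self_eq_sum_sq (fun c m ↦ hf0 _) hf

lemma sum_range_sq_pow_add_pow_sub_mul {R : Type*} [CommRing R] (a : R) (q : ℕ) :
    (∑ c ∈ Finset.range q, (a ^ c + a ^ (q - c)) ^ 2) * (1 - a ^ 2) =
      (1 + a ^ 2) * (1 - (a ^ q) ^ 2) + 2 * q * a ^ q * (1 - a ^ 2) := by
  have hterm : ∀ c ∈ Finset.range q,
      (a ^ c + a ^ (q - c)) ^ 2 = (a ^ 2) ^ c + (a ^ 2) ^ (q - c) + 2 * a ^ q := by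
    intro c hc
    rw [Finset.mem_range] at hc
    rw [← pow_mul, ← pow_mul, add_sq, mul_assoc, ← pow_add, Nat.add_sub_cancel' hc.le]
    ring
  have hreflect :
      ∑ c ∈ Finset.range q, (a ^ 2) ^ (q - c) = a ^ 2 * ∑ c ∈ Finset.range q, (a ^ 2) ^ c := by
    rw [← Finset.sum_range_reflect, Finset.mul_sum]
    refine Finset.sum_congr rfl fun c hc ↦ ?_
    rw [Finset.mem_range] at hc
    rw [← pow_succ', show q - (q - 1 - c) = c + 1 by omega]
  rw [Finset.sum_congr rfl hterm, Finset.sum_add_distrib, Finset.sum_add_distrib, hreflect,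
    Finset.sum_const, Finset.card_range, nsmul_eq_mul]
  linear_combination (1 + a ^ 2) * geom_sum_mul_neg (a ^ 2) q

lemma fsLq_lap_mul {r : ℝ} (hr : 0 < r) (q : ℕ) [NeZero q] :
    fsLq lap r q * (1 - exp (-2 / r) ^ q) ^ 2 * (1 - exp (-2 / r) ^ 2) =
      (1 + exp (-2 / r) ^ 2) * (1 - (exp (-2 / r) ^ q) ^ 2) +
        2 * q * exp (-2 / r) ^ q * (1 - exp (-2 / r) ^ 2) := by
  set a := exp (-2 / r)
  have ha1 : a < 1 := exp_neg_two_div_lt_one hr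
  have hb1 : a ^ q < 1 := pow_lt_one₀ (exp_pos _).le ha1 (NeZero.ne q)
  have hfiber : ∀ c : Fin q, HasSum (fun m : ℤ ↦ lap (((c + q * m : ℤ) : ℝ) / r))
      ((a ^ (c : ℕ) + a ^ (q - c)) / (1 - a ^ q)) := fun c ↦ by
    simp_rw [lap_intCast_div hr.le]
    exact hasSum_pow_natAbs_add_mul (exp_pos _).le ha1 c.isLt
  have hlap0 : ∀ x, 0 ≤ lap x := fun x ↦ (exp_pos _).le
  rw [fsLq_eq_sum_sq hlap0 r q fun c ↦ (hfiber c).summable,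
    Finset.sum_congr rfl fun c _ ↦ by rw [(hfiber c).tsum_eq], Finset.sum_mul]
  simp_rw [div_pow, div_mul_cancel₀ _ (pow_ne_zero 2 (sub_pos.mpr hb1).ne')]
  rw [Fin.sum_univ_eq_sum_range (fun c ↦ (a ^ c + a ^ (q - c)) ^ 2),
    sum_range_sq_pow_add_pow_sub_mul]

lemma tanh_mul_El_mul_fsLq_lap_lt_one {r : ℝ} (hr : 0 < r) (q : ℕ) [NeZero q] :
    tanh (2 / r) * El (q / r) * fsLq lap r q < 1 := by
  have hF := fsLq_lap_mul hr q
  set a := exp (-2 / r)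
  have hb : exp (-2 * (q / r)) = a ^ q := by rw [← exp_nat_mul]; ring_nf
  have ha : exp (-2 * (2 / r)) = a ^ 2 := by rw [← exp_nat_mul]; ring_nf
  have hq : (0 : ℝ) < q := by exact_mod_cast Nat.pos_of_neZero q
  rw [tanh_eq_one_sub_exp_div, El_eq (by positivity), hb, ha]
  set b := a ^ q
  have ha0 : 0 < a := exp_pos _
  have ha1 : a < 1 := exp_neg_two_div_lt_one hr
  have hb0 : 0 < b := pow_pos ha0 q
  have hb1 : b < 1 := pow_lt_one₀ ha0.le ha1 (NeZero.ne q)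
  have htanh : (1 - a ^ 2) / (1 + a ^ 2) < 2 / r := by
    rw [← ha, ← tanh_eq_one_sub_exp_div]
    exact tanh_lt_self (by positivity)
  have hkey : 2 * q * b * (1 - a ^ 2) < 4 * (q / r) * b * (1 + a ^ 2) := by
    rw [div_lt_iff₀ (by positivity)] at htanh
    calc 2 * q * b * (1 - a ^ 2) < 2 * q * b * (2 / r * (1 + a ^ 2)) :=
          mul_lt_mul_of_pos_left htanh (by positivity)
      _ = 4 * (q / r) * b * (1 + a ^ 2) := by ring
  have hD : 0 < (1 - b ^ 2) + 4 * (q / r) * b := by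
    have : 0 < 4 * (q / r) * b := by positivity
    nlinarith
  rw [div_mul_div_comm, div_mul_eq_mul_div, div_lt_one (by positivity)]
  linarith

lemma fsLq_lap_pos {r : ℝ} (hr : 0 < r) (q : ℕ) [NeZero q] : 0 < fsLq lap r q := by
  have hF := fsLq_lap_mul hr q
  set a := exp (-2 / r)
  have ha0 : 0 < a := exp_pos _
  have ha1 : a < 1 := exp_neg_two_div_lt_one hr
  have hb1 : a ^ q < 1 := pow_lt_one₀ ha0.le ha1 (NeZero.ne q)
  have hrhs : 0 < (1 + a ^ 2) * (1 - (a ^ q) ^ 2) + 2 * q * a ^ q * (1 - a ^ 2) := by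
    have hb2 : 0 < 1 - (a ^ q) ^ 2 := by nlinarith [pow_pos ha0 q]
    have ha2 : 0 < 1 - a ^ 2 := by nlinarith
    positivity
  rw [← hF, mul_assoc] at hrhs
  exact pos_of_mul_pos_left hrhs (mul_nonneg (sq_nonneg _) (by nlinarith))

/-- Average-case Laplacian rate bound: for both the continuous Laplacian channel
(density `f_r(x)/r` on ℝ) and the discrete one (mass `f_r(x)/f_r(ℤ)` on ℤ), with
`μ_{r,r} = E_{e←D_r}[f_r(e)]`, we have `μ_{r,r}²/f_r(L_q) > (tanh(2/r)/4)·E(q/r)`. -/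
theorem avg_case_laplacian_rate (r : ℝ) (hr : 0 < r) (q : ℕ) (hq : Nat.Prime q) :
    (∫ e : ℝ, lap (e / r) / r * lap (e / r)) ^ 2 / fsLq lap r q >
        Real.tanh (2 / r) / 4 * El (q / r) ∧
      ((∑' k : ℤ, lap ((k : ℝ) / r) * lap ((k : ℝ) / r)) /
            (∑' k : ℤ, lap ((k : ℝ) / r))) ^ 2 / fsLq lap r q >
        Real.tanh (2 / r) / 4 * El (q / r) := by
  have : NeZero q := ⟨hq.ne_zero⟩
  have hbound := tanh_mul_El_mul_fsLq_lap_lt_one hr q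
  have hrate : ∀ μ : ℝ, 1 / 2 ≤ μ → μ ^ 2 / fsLq lap r q > tanh (2 / r) / 4 * El (q / r) := by
    intro μ hμ
    rw [gt_iff_lt, lt_div_iff₀ (fsLq_lap_pos hr q)]
    nlinarith
  exact ⟨hrate _ (integral_lap_div_mul_lap hr).ge,
    hrate _ (half_le_tsum_lap_mul_lap_div_tsum_lap hr)⟩

end
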